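/- Let n, N, m be positive natural numbers. Let h_j : EuclideanSpace ℝ (Fin n) → ℝ (j = 1,…,m) be convex differentiable functions defining the feasible set C = {x : h_j(x) ≤ 0 for all j}, and suppose Slater's condition holds, i.e. there exists x̄ with h_j(x̄) < 0 for all j. For i = 1,…,N let f_i : EuclideanSpace ℝ (Fin n) → ℝ be concave, differentiable and nonnegative on C, and let g_i : EuclideanSpace ℝ (Fin n) → ℝ be convex, differentiable and strictly positive on C. If x* ∈ C maximizes the sum-of-ratios objective x ↦ Σ_{i=1}^N f_i(x)/g_i(x) over C, then there exist parameters μ*_i and β*_i (i = 1,…,N) such that x* also maximizes the parametric subtractive objective x ↦ Σ_{i=1}^N μ*_i (f_i(x) − β*_i g_i(x)) over C, and the parameters satisfy the system of equations β*_i · g_i(x*) − f_i(x*) = 0 and μ*_i · g_i(x*) − 1 = 0 for every i. -/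

import Mathlib

/-!
Put `βᵢ = fᵢ(x*)/gᵢ(x*)` and `φᵢ = fᵢ - βᵢ gᵢ`, which is concave with `φᵢ(x*) = 0`. On the segment
`zₜ = (1 - t) x* + t y` in `C`, concavity gives `φᵢ(zₜ) ≥ t φᵢ(y)`, while maximality of `x*` gives
`∑ φᵢ(zₜ)/gᵢ(zₜ) = ∑ fᵢ(zₜ)/gᵢ(zₜ) - ∑ βᵢ ≤ 0`. Hence `∑ φᵢ(y)/gᵢ(zₜ) ≤ 0` for `0 < t ≤ 1`, and
letting `t → 0⁺` (continuity of the `gᵢ` at `x*`) yields `∑ μᵢ φᵢ(y) ≤ 0 = ∑ μᵢ φᵢ(x*)` with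
`μᵢ = 1/gᵢ(x*)`.
-/

open Filter Topology

theorem convex_setOf_forall_le_zero {ι E : Type*} [AddCommGroup E] [Module ℝ E]
    {c : ι → E → ℝ} (hc : ∀ j, ConvexOn ℝ Set.univ (c j)) : Convex ℝ {x | ∀ j, c j x ≤ 0} := by
  simpa only [Set.ofPred_forall] using convex_iInter fun j => by simpa using (hc j).convex_le 0

section SumOfRatios

variable {ι E : Type*} [Fintype ι] [AddCommGroup E] [Module ℝ E] {s : Set E}
  {f g : ι → E → ℝ} {x y : E}

theorem sum_div_le_zero_of_isMaxOn_sum_div (hs : Convex ℝ s)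
    (hf : ∀ i, ConcaveOn ℝ s (f i)) (hg : ∀ i, ConvexOn ℝ s (g i))
    (hf₀ : ∀ i, 0 ≤ f i x) (hg₀ : ∀ i, ∀ z ∈ s, 0 < g i z)
    (hmax : IsMaxOn (fun z => ∑ i, f i z / g i z) s x) (hx : x ∈ s) (hy : y ∈ s)
    {t : ℝ} (ht₀ : 0 < t) (ht₁ : t ≤ 1) :
    ∑ i, (f i y - f i x / g i x * g i y) / g i ((1 - t) • x + t • y) ≤ 0 := by
  set z := (1 - t) • x + t • y
  have hz : z ∈ s := hs hx hy (sub_nonneg.2 ht₁) ht₀.le (sub_add_cancel 1 t)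
  have hφ (i : ι) :
      t * (f i y - f i x / g i x * g i y) ≤ f i z - f i x / g i x * g i z := by
    have hβ : 0 ≤ f i x / g i x := div_nonneg (hf₀ i) (hg₀ i x hx).le
    have hconc :=
      ((hf i).sub ((hg i).smul hβ)).2 hx hy (sub_nonneg.2 ht₁) ht₀.le (sub_add_cancel 1 t)
    have hφx : f i x - f i x / g i x * g i x = 0 := by
      rw [div_mul_cancel₀ _ (hg₀ i x hx).ne', sub_self]
    simpa only [Pi.sub_apply, smul_eq_mul, hφx, mul_zero, zero_add] using hconc
  have hsum : ∑ i, (f i z - f i x / g i x * g i z) / g i z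
      = ∑ i, f i z / g i z - ∑ i, f i x / g i x := by
    rw [← Finset.sum_sub_distrib]
    refine Finset.sum_congr rfl fun i _ => ?_
    field_simp [(hg₀ i z hz).ne']
  have hle : t * ∑ i, (f i y - f i x / g i x * g i y) / g i z ≤ 0 :=
    calc t * ∑ i, (f i y - f i x / g i x * g i y) / g i z
        = ∑ i, t * (f i y - f i x / g i x * g i y) / g i z := by
          simp only [Finset.mul_sum, mul_div_assoc]
      _ ≤ ∑ i, (f i z - f i x / g i x * g i z) / g i z :=
          Finset.sum_le_sum fun i _ => div_le_div_of_nonneg_right (hφ i) (hg₀ i z hz).le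
      _ ≤ 0 := by rw [hsum]; exact sub_nonpos.mpr (hmax hz)
  exact nonpos_of_mul_nonpos_right hle ht₀

variable [TopologicalSpace E] [ContinuousAdd E] [ContinuousSMul ℝ E]

theorem isMaxOn_sum_parametric_of_isMaxOn_sum_div (hs : Convex ℝ s)
    (hf : ∀ i, ConcaveOn ℝ s (f i)) (hg : ∀ i, ConvexOn ℝ s (g i))
    (hgc : ∀ i, ContinuousAt (g i) x)
    (hf₀ : ∀ i, 0 ≤ f i x) (hg₀ : ∀ i, ∀ z ∈ s, 0 < g i z)
    (hmax : IsMaxOn (fun z => ∑ i, f i z / g i z) s x) (hx : x ∈ s) :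
    IsMaxOn (fun z => ∑ i, (g i x)⁻¹ * (f i z - f i x / g i x * g i z)) s x := by
  intro y hy
  have hsegment : Tendsto (fun t : ℝ => (1 - t) • x + t • y) (𝓝[>] 0) (𝓝 x) := by
    have : Continuous fun t : ℝ => (1 - t) • x + t • y := by fun_prop
    exact (this.tendsto' 0 x (by simp)).mono_left nhdsWithin_le_nhds
  have hlim : Tendsto
      (fun t : ℝ => ∑ i, (f i y - f i x / g i x * g i y) / g i ((1 - t) • x + t • y)) (𝓝[>] 0)
      (𝓝 (∑ i, (f i y - f i x / g i x * g i y) / g i x)) :=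
    tendsto_finsetSum _ fun i _ =>
      tendsto_const_nhds.div ((hgc i).tendsto.comp hsegment) (hg₀ i x hx).ne'
  have hnonpos : ∑ i, (f i y - f i x / g i x * g i y) / g i x ≤ 0 := by
    refine le_of_tendsto hlim ?_
    filter_upwards [Ioc_mem_nhdsGT one_pos] with t ht
    exact sum_div_le_zero_of_isMaxOn_sum_div hs hf hg hf₀ hg₀ hmax hx hy ht.1 ht.2
  have hφx (i : ι) : f i x - f i x / g i x * g i x = 0 := by
    rw [div_mul_cancel₀ _ (hg₀ i x hx).ne', sub_self]
  simpa only [Set.mem_ofPred_eq, hφx, mul_zero, Finset.sum_const_zero, inv_mul_eq_div] using hnonpos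

end SumOfRatios

theorem sum_of_ratios_parametric_transform_general
    (n N m : ℕ)
    (hc : Fin m → EuclideanSpace ℝ (Fin n) → ℝ)
    (hconv : ∀ j, ConvexOn ℝ Set.univ (hc j))
    (C : Set (EuclideanSpace ℝ (Fin n)))
    (hC : C = {x | ∀ j, hc j x ≤ 0})
    (f g : Fin N → EuclideanSpace ℝ (Fin n) → ℝ)
    (hfconc : ∀ i, ConcaveOn ℝ C (f i))
    (hfnn : ∀ i, ∀ x ∈ C, 0 ≤ f i x)
    (hgconv : ∀ i, ConvexOn ℝ C (g i))
    (hgdiff : ∀ i, Differentiable ℝ (g i))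
    (hgpos : ∀ i, ∀ x ∈ C, 0 < g i x)
    (xstar : EuclideanSpace ℝ (Fin n)) (hxstar : xstar ∈ C)
    (hmax : ∀ x ∈ C, (∑ i, f i x / g i x) ≤ ∑ i, f i xstar / g i xstar) :
    ∃ μ β : Fin N → ℝ,
      (∀ x ∈ C, (∑ i, μ i * (f i x - β i * g i x)) ≤
        ∑ i, μ i * (f i xstar - β i * g i xstar)) ∧
      (∀ i, β i * g i xstar - f i xstar = 0 ∧ μ i * g i xstar - 1 = 0) := by
  have hg₀ (i : Fin N) : g i xstar ≠ 0 := (hgpos i xstar hxstar).ne'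
  refine ⟨fun i => (g i xstar)⁻¹, fun i => f i xstar / g i xstar, ?_, fun i =>
    ⟨sub_eq_zero.mpr (div_mul_cancel₀ _ (hg₀ i)), sub_eq_zero.mpr (inv_mul_cancel₀ (hg₀ i))⟩⟩
  exact isMaxOn_sum_parametric_of_isMaxOn_sum_div (hC ▸ convex_setOf_forall_le_zero hconv)
    hfconc hgconv (fun i => (hgdiff i).continuous.continuousAt) (fun i => hfnn i xstar hxstar)
    hgpos hmax hxstar

/-- Theorem 1 (generic form): transformation of a sum-of-ratios maximization over a
convex feasible set (defined by convex differentiable constraints satisfying Slater's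
condition) into an equivalent parametric subtractive form. -/
theorem sum_of_ratios_parametric_transform
    (n N m : ℕ) (hn : 0 < n) (hN : 0 < N) (hm : 0 < m)
    (hc : Fin m → EuclideanSpace ℝ (Fin n) → ℝ)
    (hconv : ∀ j, ConvexOn ℝ Set.univ (hc j))
    (hdiff : ∀ j, Differentiable ℝ (hc j))
    (C : Set (EuclideanSpace ℝ (Fin n)))
    (hC : C = {x | ∀ j, hc j x ≤ 0})
    (slater : ∃ xbar, ∀ j, hc j xbar < 0)
    (f g : Fin N → EuclideanSpace ℝ (Fin n) → ℝ)
    (hfconc : ∀ i, ConcaveOn ℝ C (f i))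
    (hfdiff : ∀ i, Differentiable ℝ (f i))
    (hfnn : ∀ i, ∀ x ∈ C, 0 ≤ f i x)
    (hgconv : ∀ i, ConvexOn ℝ C (g i))
    (hgdiff : ∀ i, Differentiable ℝ (g i))
    (hgpos : ∀ i, ∀ x ∈ C, 0 < g i x)
    (xstar : EuclideanSpace ℝ (Fin n)) (hxstar : xstar ∈ C)
    (hmax : ∀ x ∈ C, (∑ i, f i x / g i x) ≤ ∑ i, f i xstar / g i xstar) :
    ∃ μ β : Fin N → ℝ,
      (∀ x ∈ C, (∑ i, μ i * (f i x - β i * g i x)) ≤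
        ∑ i, μ i * (f i xstar - β i * g i xstar)) ∧
      (∀ i, β i * g i xstar - f i xstar = 0 ∧ μ i * g i xstar - 1 = 0) :=
  sum_of_ratios_parametric_transform_general n N m hc hconv C hC f g hfconc hfnn hgconv hgdiff hgpos
    xstar hxstar hmax
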